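/- arXiv:1306.0203 — 2 statements merged into one kernel-verified Lean document; each statement's English description precedes it below -/
import Mathlib

section
/- Let α>0, n = ⌊α⌋+1, and x ∈ Cⁿ[a,b]. Then for every t ∈ [a,b], (_aI_t^α (^C_aD^α x))(t) = x(t) − Σ_{k=0}^{n−1} [x^{(k)}(a)/k!] (t−a)^k. -/
/-!
The Caputo derivative of order `α` is the Riemann–Liouville integral of order `n - α` of `x⁽ⁿ⁾`,
so by the semigroup law `I^α I^β = I^(α+β)` the left-hand side is
`I^n x⁽ⁿ⁾ (t) = ∫ s in a..t, (t - s)^(n-1) / (n-1)! * x⁽ⁿ⁾ s`, the integral form of the remainder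
in Taylor's formula of order `n - 1` at `a`. The semigroup law comes from exchanging the order of
integration over the triangle `a ≤ s ≤ τ ≤ t`, where the kernel is integrable, and evaluating
`∫ τ in s..t, (t - τ)^(α-1) * (τ - s)^(β-1) = B(α, β) * (t - s)^(α+β-1)` through the Beta function.
-/

/-- Left Riemann–Liouville fractional integral of order `α` with base point `a`. -/
noncomputable def leftRLI (a α : ℝ) (x : ℝ → ℝ) (t : ℝ) : ℝ :=
  (1 / Real.Gamma α) * ∫ τ in a..t, (t - τ) ^ (α - 1) * x τ

/-- Left Caputo fractional derivative of order `α` (with `n = ⌊α⌋+1`) of a function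
on `[a,b]`, base point `a`. -/
noncomputable def leftCaputo (a b α : ℝ) (n : ℕ) (x : ℝ → ℝ) (t : ℝ) : ℝ :=
  (1 / Real.Gamma ((n : ℝ) - α)) *
    ∫ τ in a..t, (t - τ) ^ ((n : ℝ) - α - 1) * iteratedDerivWithin n x (Set.Icc a b) τ

open MeasureTheory Set

theorem integral_rpow_mul_one_sub_rpow {u v : ℝ} (hu : 0 < u) (hv : 0 < v) :
    ∫ x in (0 : ℝ)..1, x ^ (u - 1) * (1 - x) ^ (v - 1) =
      Real.Gamma u * Real.Gamma v / Real.Gamma (u + v) := by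
  have hbeta : Complex.betaIntegral u v =
      ((∫ x in (0 : ℝ)..1, x ^ (u - 1) * (1 - x) ^ (v - 1) : ℝ) : ℂ) := by
    rw [Complex.betaIntegral, ← intervalIntegral.integral_ofReal]
    refine intervalIntegral.integral_congr fun x hx => ?_
    rw [uIcc_of_le zero_le_one] at hx
    push_cast
    rw [Complex.ofReal_cpow hx.1, Complex.ofReal_cpow (sub_nonneg.2 hx.2)]
    push_cast
    ring_nf
  have h := Complex.Gamma_mul_Gamma_eq_betaIntegral (s := u) (t := v)
    (by simpa using hu) (by simpa using hv)
  rw [hbeta, ← Complex.ofReal_add, Complex.Gamma_ofReal, Complex.Gamma_ofReal,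
    Complex.Gamma_ofReal] at h
  have h' : Real.Gamma u * Real.Gamma v = Real.Gamma (u + v) *
      ∫ x in (0 : ℝ)..1, x ^ (u - 1) * (1 - x) ^ (v - 1) := mod_cast h
  rw [h', mul_div_cancel_left₀ _ (Real.Gamma_pos_of_pos (add_pos hu hv)).ne']

theorem integral_sub_rpow_mul_sub_rpow {α β s t : ℝ} (hα : 0 < α) (hβ : 0 < β) (hst : s < t) :
    ∫ τ in s..t, (t - τ) ^ (α - 1) * (τ - s) ^ (β - 1) =
      Real.Gamma α * Real.Gamma β / Real.Gamma (α + β) * (t - s) ^ (α + β - 1) := by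
  have hc : 0 < t - s := sub_pos.2 hst
  have hrescale : ∀ x ∈ uIcc (0 : ℝ) 1,
      (t - (s + (t - s) * x)) ^ (α - 1) * (s + (t - s) * x - s) ^ (β - 1) =
        (t - s) ^ (α + β - 2) * (x ^ (β - 1) * (1 - x) ^ (α - 1)) := by
    intro x hx
    rw [uIcc_of_le zero_le_one] at hx
    rw [show t - (s + (t - s) * x) = (t - s) * (1 - x) by ring, add_sub_cancel_left,
      Real.mul_rpow hc.le (sub_nonneg.2 hx.2), Real.mul_rpow hc.le hx.1,
      show α + β - 2 = (α - 1) + (β - 1) by ring, Real.rpow_add hc]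
    ring
  have hsub := intervalIntegral.integral_comp_add_mul
    (fun τ => (t - τ) ^ (α - 1) * (τ - s) ^ (β - 1)) hc.ne' s (a := 0) (b := 1)
  simp only [mul_zero, add_zero, mul_one, add_sub_cancel, smul_eq_mul] at hsub
  calc ∫ τ in s..t, (t - τ) ^ (α - 1) * (τ - s) ^ (β - 1)
      = (t - s) * ∫ x in (0 : ℝ)..1,
          (t - (s + (t - s) * x)) ^ (α - 1) * (s + (t - s) * x - s) ^ (β - 1) := by
        rw [hsub, mul_inv_cancel_left₀ hc.ne']
    _ = (t - s) * (t - s) ^ (α + β - 2) *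
          ∫ x in (0 : ℝ)..1, x ^ (β - 1) * (1 - x) ^ (α - 1) := by
        rw [intervalIntegral.integral_congr hrescale, intervalIntegral.integral_const_mul,
          mul_assoc]
    _ = Real.Gamma α * Real.Gamma β / Real.Gamma (α + β) * (t - s) ^ (α + β - 1) := by
        rw [integral_rpow_mul_one_sub_rpow hβ hα, add_comm β α,
          show α + β - 1 = 1 + (α + β - 2) by ring, Real.rpow_add hc, Real.rpow_one]
        ring

theorem intervalIntegrable_sub_rpow {β : ℝ} (hβ : 0 < β) (c d : ℝ) :
    IntervalIntegrable (fun s => (c - s) ^ (β - 1)) volume d c := by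
  simpa using (intervalIntegral.intervalIntegrable_rpow' (a := c - d) (b := c - c)
    (by linarith : (-1 : ℝ) < β - 1)).comp_sub_left c

theorem integral_sub_rpow {β : ℝ} (hβ : 0 < β) (c d : ℝ) :
    ∫ s in d..c, (c - s) ^ (β - 1) = (c - d) ^ β / β := by
  rw [intervalIntegral.integral_comp_sub_left (fun s => s ^ (β - 1)), sub_self,
    integral_rpow (Or.inl (by linarith)), sub_add_cancel, Real.zero_rpow hβ.ne', sub_zero]

/-- The closed triangle `a ≤ s ≤ τ ≤ t`, written in coordinates `p = (τ, s)`. -/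
def lowerTriangle (a t : ℝ) : Set (ℝ × ℝ) := {p | a ≤ p.2 ∧ p.2 ≤ p.1 ∧ p.1 ≤ t}

theorem measurableSet_lowerTriangle (a t : ℝ) : MeasurableSet (lowerTriangle a t) :=
  (measurableSet_le measurable_const measurable_snd).inter
    ((measurableSet_le measurable_snd measurable_fst).inter
      (measurableSet_le measurable_fst measurable_const))

theorem isCompact_lowerTriangle (a t : ℝ) : IsCompact (lowerTriangle a t) := by
  refine (isCompact_Icc.prod isCompact_Icc).of_isClosed_subset ?_
    (fun p hp => ⟨⟨hp.1.trans hp.2.1, hp.2.2⟩, hp.1, hp.2.1.trans hp.2.2⟩ :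
      lowerTriangle a t ⊆ Icc a t ×ˢ Icc a t)
  exact (isClosed_le continuous_const continuous_snd).inter
    ((isClosed_le continuous_snd continuous_fst).inter
      (isClosed_le continuous_fst continuous_const))

section indicator

variable {E : Type*} [Zero E] {a t : ℝ} (F : ℝ × ℝ → E)

theorem indicator_lowerTriangle_of_mem_fst {τ : ℝ} (hτ : τ ∈ Icc a t) (s : ℝ) :
    (lowerTriangle a t).indicator F (τ, s) = (Icc a τ).indicator (fun s => F (τ, s)) s := by
  simp only [indicator_apply, lowerTriangle, mem_ofPred_eq, mem_Icc, hτ.2, and_true]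

theorem indicator_lowerTriangle_of_notMem_fst {τ : ℝ} (hτ : τ ∉ Icc a t) (s : ℝ) :
    (lowerTriangle a t).indicator F (τ, s) = 0 :=
  indicator_of_notMem (fun h => hτ ⟨h.1.trans h.2.1, h.2.2⟩) _

theorem indicator_lowerTriangle_of_mem_snd {s : ℝ} (hs : s ∈ Icc a t) (τ : ℝ) :
    (lowerTriangle a t).indicator F (τ, s) = (Icc s t).indicator (fun τ => F (τ, s)) τ := by
  simp only [indicator_apply, lowerTriangle, mem_ofPred_eq, mem_Icc, hs.1, true_and]

theorem indicator_lowerTriangle_of_notMem_snd {s : ℝ} (hs : s ∉ Icc a t) (τ : ℝ) :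
    (lowerTriangle a t).indicator F (τ, s) = 0 :=
  indicator_of_notMem (fun h => hs ⟨h.1, h.2.1.trans h.2.2⟩) _

end indicator

theorem integral_integral_swap_lowerTriangle {E : Type*} [NormedAddCommGroup E] [NormedSpace ℝ E]
    {a t : ℝ} (hat : a ≤ t) {K : ℝ → ℝ → E}
    (hK : IntegrableOn (Function.uncurry K) (lowerTriangle a t)) :
    ∫ τ in a..t, ∫ s in a..τ, K τ s = ∫ s in a..t, ∫ τ in s..t, K τ s := by
  set F := (lowerTriangle a t).indicator (Function.uncurry K)
  have hF : Integrable F (volume.prod volume) := by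
    rw [← Measure.volume_eq_prod]
    exact (integrable_indicator_iff (measurableSet_lowerTriangle a t)).2 hK
  have hfst : ∀ τ, ∫ s, F (τ, s) = (Icc a t).indicator (fun τ => ∫ s in a..τ, K τ s) τ := by
    intro τ
    by_cases hτ : τ ∈ Icc a t
    · simp only [F, indicator_lowerTriangle_of_mem_fst _ hτ, integral_indicator measurableSet_Icc,
        indicator_of_mem hτ, intervalIntegral.integral_of_le hτ.1, integral_Icc_eq_integral_Ioc,
        Function.uncurry_apply_pair]
    · simp only [F, indicator_lowerTriangle_of_notMem_fst _ hτ, integral_zero,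
        indicator_of_notMem hτ]
  have hsnd : ∀ s, ∫ τ, F (τ, s) = (Icc a t).indicator (fun s => ∫ τ in s..t, K τ s) s := by
    intro s
    by_cases hs : s ∈ Icc a t
    · simp only [F, indicator_lowerTriangle_of_mem_snd _ hs, integral_indicator measurableSet_Icc,
        indicator_of_mem hs, intervalIntegral.integral_of_le hs.2, integral_Icc_eq_integral_Ioc,
        Function.uncurry_apply_pair]
    · simp only [F, indicator_lowerTriangle_of_notMem_snd _ hs, integral_zero,
        indicator_of_notMem hs]
  have hswap := integral_integral_swap (f := fun τ s => F (τ, s)) hF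
  simp only [hfst, hsnd, integral_indicator measurableSet_Icc, integral_Icc_eq_integral_Ioc]
    at hswap
  rwa [intervalIntegral.integral_of_le hat, intervalIntegral.integral_of_le hat]

theorem integrableOn_rpow_kernel_lowerTriangle {a t α β : ℝ} (hα : 0 < α) (hβ : 0 < β) :
    IntegrableOn (fun p : ℝ × ℝ => (t - p.1) ^ (α - 1) * (p.1 - p.2) ^ (β - 1))
      (lowerTriangle a t) := by
  set k := fun p : ℝ × ℝ => (t - p.1) ^ (α - 1) * (p.1 - p.2) ^ (β - 1)
  have hk : ∀ τ ∈ Icc a t, ∀ s ∈ Icc a τ, ‖k (τ, s)‖ = k (τ, s) := fun τ hτ s hs =>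
    Real.norm_of_nonneg (mul_nonneg (Real.rpow_nonneg (sub_nonneg.2 hτ.2) _)
      (Real.rpow_nonneg (sub_nonneg.2 hs.2) _))
  rw [← integrable_indicator_iff (measurableSet_lowerTriangle a t), Measure.volume_eq_prod]
  have hmeas : AEStronglyMeasurable ((lowerTriangle a t).indicator k) (volume.prod volume) :=
    ((by fun_prop : Measurable k).indicator (measurableSet_lowerTriangle a t)).aestronglyMeasurable
  have hslice : ∀ τ ∈ Icc a t, IntegrableOn (fun s => k (τ, s)) (Icc a τ) := fun τ hτ =>
    ((intervalIntegrable_iff_integrableOn_Icc_of_le hτ.1).1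
      ((intervalIntegrable_sub_rpow hβ τ a).const_mul ((t - τ) ^ (α - 1))))
  have hnorm : (fun τ => ∫ s, ‖(lowerTriangle a t).indicator k (τ, s)‖) =
      (Icc a t).indicator (fun τ => (t - τ) ^ (α - 1) * ((τ - a) ^ β / β)) := by
    ext τ
    by_cases hτ : τ ∈ Icc a t
    · rw [indicator_of_mem hτ, ← integral_sub_rpow hβ, ← intervalIntegral.integral_const_mul,
        intervalIntegral.integral_of_le hτ.1, ← integral_Icc_eq_integral_Ioc,
        ← integral_indicator measurableSet_Icc]
      refine integral_congr_ae (Filter.Eventually.of_forall fun s => ?_)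
      simp only [indicator_lowerTriangle_of_mem_fst _ hτ, norm_indicator_eq_indicator_norm]
      exact congrFun (indicator_congr fun s hs => hk τ hτ s hs) s
    · simp [indicator_lowerTriangle_of_notMem_fst _ hτ, hτ]
  refine (integrable_prod_iff hmeas).2 ⟨Filter.Eventually.of_forall fun τ => ?_, ?_⟩
  · by_cases hτ : τ ∈ Icc a t
    · simp only [indicator_lowerTriangle_of_mem_fst _ hτ]
      exact (integrable_indicator_iff measurableSet_Icc).2 (hslice τ hτ)
    · simp only [indicator_lowerTriangle_of_notMem_fst _ hτ]
      exact integrable_zero _ _ _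
  · rw [hnorm, integrable_indicator_iff measurableSet_Icc, integrableOn_Icc_iff_integrableOn_Ioc]
    have hcont : Continuous fun τ => (τ - a) ^ β / β :=
      ((Real.continuous_rpow_const hβ.le).comp (continuous_sub_right a)).div_const β
    exact ((intervalIntegrable_sub_rpow hα t a).mul_continuousOn hcont.continuousOn).1

theorem leftRLI_leftRLI {a t α β : ℝ} {f : ℝ → ℝ} (hα : 0 < α) (hβ : 0 < β) (hat : a ≤ t)
    (hf : ContinuousOn f (Icc a t)) :
    leftRLI a α (leftRLI a β f) t = leftRLI a (α + β) f t := by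
  have hK : IntegrableOn
      (fun p : ℝ × ℝ => (t - p.1) ^ (α - 1) * ((p.1 - p.2) ^ (β - 1) * f p.2))
      (lowerTriangle a t) := by
    simp_rw [← mul_assoc]
    exact (integrableOn_rpow_kernel_lowerTriangle hα hβ).mul_continuousOn
      (hf.comp continuousOn_snd fun p hp => ⟨hp.1, hp.2.1.trans hp.2.2⟩)
      (isCompact_lowerTriangle a t)
  have hinner : ∀ᵐ s, s ∈ uIoc a t →
      ∫ τ in s..t, (t - τ) ^ (α - 1) * ((τ - s) ^ (β - 1) * f s) =
        Real.Gamma α * Real.Gamma β / Real.Gamma (α + β) * ((t - s) ^ (α + β - 1) * f s) := by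
    filter_upwards [Measure.ae_ne volume t] with s hst hs
    rw [uIoc_of_le hat] at hs
    simp_rw [← mul_assoc]
    rw [intervalIntegral.integral_mul_const,
      integral_sub_rpow_mul_sub_rpow hα hβ (lt_of_le_of_ne hs.2 hst)]
  have hΓα := (Real.Gamma_pos_of_pos hα).ne'
  have hΓβ := (Real.Gamma_pos_of_pos hβ).ne'
  calc leftRLI a α (leftRLI a β f) t
      = 1 / Real.Gamma α * (1 / Real.Gamma β *
          ∫ τ in a..t, ∫ s in a..τ, (t - τ) ^ (α - 1) * ((τ - s) ^ (β - 1) * f s)) := by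
        rw [leftRLI, ← intervalIntegral.integral_const_mul (1 / Real.Gamma β)]
        congr 1
        refine intervalIntegral.integral_congr fun τ _ => ?_
        rw [leftRLI, mul_left_comm, ← intervalIntegral.integral_const_mul]
    _ = 1 / Real.Gamma α * (1 / Real.Gamma β *
          ∫ s in a..t, Real.Gamma α * Real.Gamma β / Real.Gamma (α + β) *
            ((t - s) ^ (α + β - 1) * f s)) := by
        rw [integral_integral_swap_lowerTriangle (K := fun τ s =>
            (t - τ) ^ (α - 1) * ((τ - s) ^ (β - 1) * f s)) hat hK,
          intervalIntegral.integral_congr_ae hinner]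
    _ = leftRLI a (α + β) f t := by
        rw [leftRLI, intervalIntegral.integral_const_mul]
        field_simp

theorem leftCaputo_eq_leftRLI (a b α : ℝ) (n : ℕ) (x : ℝ → ℝ) :
    leftCaputo a b α n x = leftRLI a (n - α) (iteratedDerivWithin n x (Icc a b)) :=
  rfl

theorem leftRLI_natCast_add_one (a t : ℝ) (m : ℕ) (f : ℝ → ℝ) :
    leftRLI a ((m + 1 : ℕ) : ℝ) f t = ∫ s in a..t, (t - s) ^ m / m.factorial * f s := by
  rw [leftRLI, ← intervalIntegral.integral_const_mul]
  refine intervalIntegral.integral_congr fun s _ => ?_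
  rw [Nat.cast_succ, Real.Gamma_nat_eq_factorial, add_sub_cancel_right, Real.rpow_natCast]
  ring

theorem taylor_integral_remainder_Icc {f : ℝ → ℝ} {a b t : ℝ} {m : ℕ}
    (hf : ContDiffOn ℝ (m + 1 : ℕ) f (Icc a b)) (ht : t ∈ Icc a b) :
    f t - ∑ k ∈ Finset.range (m + 1),
        iteratedDerivWithin k f (Icc a b) a / k.factorial * (t - a) ^ k =
      ∫ s in a..t, (t - s) ^ m / m.factorial * iteratedDerivWithin (m + 1) f (Icc a b) s := by
  rcases ht.1.eq_or_lt with rfl | hat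
  · simp [Finset.sum_range_succ']
  -- Mathlib's Taylor formula differentiates within `uIcc a t`; away from `t` this is `Icc a b`.
  have hderiv : ∀ k, ∀ y < t,
      iteratedDerivWithin k f (uIcc a t) y = iteratedDerivWithin k f (Icc a b) y := by
    intro k y hy
    have hset : uIcc a t =ᶠ[nhds y] Icc a b := by
      filter_upwards [Iio_mem_nhds hy] with z hz
      rw [uIcc_of_le hat.le]
      exact propext ⟨fun h => ⟨h.1, h.2.trans ht.2⟩, fun h => ⟨h.1, hz.le⟩⟩
    simp only [iteratedDerivWithin, iteratedFDerivWithin_congr_set hset]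
  calc f t - ∑ k ∈ Finset.range (m + 1),
          iteratedDerivWithin k f (Icc a b) a / k.factorial * (t - a) ^ k
      = f t - taylorWithinEval f m (uIcc a t) a t := by
        rw [taylor_within_apply]
        refine congrArg _ (Finset.sum_congr rfl fun k _ => ?_)
        rw [hderiv k a hat, smul_eq_mul]
        ring
    _ = ∫ s in a..t, (t - s) ^ m / m.factorial * iteratedDerivWithin (m + 1) f (uIcc a t) s :=
        taylor_integral_remainder
          (hf.mono (by rw [uIcc_of_le hat.le]; exact Icc_subset_Icc_right ht.2))
    _ = ∫ s in a..t, (t - s) ^ m / m.factorial * iteratedDerivWithin (m + 1) f (Icc a b) s := by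
        refine intervalIntegral.integral_congr_ae ?_
        filter_upwards [Measure.ae_ne volume t] with s hst hs
        rw [uIoc_of_le hat.le] at hs
        rw [hderiv _ s (lt_of_le_of_ne hs.2 hst)]

/-- The left Riemann–Liouville fractional integral of the left Caputo fractional
derivative recovers the function up to its Taylor polynomial at `a`. -/
theorem leftRLI_leftCaputo (a b α : ℝ) (hab : a < b) (hα : 0 < α)
    (n : ℕ) (hn : n = ⌊α⌋₊ + 1)
    (x : ℝ → ℝ) (hx : ContDiffOn ℝ n x (Set.Icc a b)) :
    ∀ t ∈ Set.Icc a b,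
      leftRLI a α (leftCaputo a b α n x) t =
        x t - ∑ k ∈ Finset.range n,
          iteratedDerivWithin k x (Set.Icc a b) a / (Nat.factorial k) * (t - a) ^ k := by
  intro t ht
  subst hn
  have hαn : α < ((⌊α⌋₊ + 1 : ℕ) : ℝ) := by
    push_cast
    exact Nat.lt_floor_add_one α
  have hg : ContinuousOn (iteratedDerivWithin (⌊α⌋₊ + 1) x (Icc a b)) (Icc a t) :=
    (hx.continuousOn_iteratedDerivWithin le_rfl (uniqueDiffOn_Icc hab)).mono
      (Icc_subset_Icc_right ht.2)
  rw [leftCaputo_eq_leftRLI, leftRLI_leftRLI hα (sub_pos.2 hαn) ht.1 hg, add_sub_cancel,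
    leftRLI_natCast_add_one, taylor_integral_remainder_Icc hx ht]
end

section
/- Let α ∈ (0,1) and define x̄(t) = 2t^{α+2}/Γ(α+3) and ū(t) = 2t^{α+1}/Γ(α+2) on [0,1]. Then the pair (x̄,ū) is an optimal solution to the problem of minimizing J(x,u) = ∫_0^1 (t u(t) − (α+2) x(t))² dt subject to x'(t) + (^C_0D_t^α x)(t) = u(t) + t² and the boundary conditions x(0)=0, x(1)=2/Γ(3+α). Specifically: (a) x̄'(t) + (^C_0D_t^α x̄)(t) = ū(t) + t² for all t ∈ [0,1]; (b) x̄(0)=0 and x̄(1)=2/Γ(3+α); (c) J(x̄,ū) = 0; and (d) J(x,u) ≥ 0 = J(x̄,ū) for every admissible pair (x ∈ C¹[0,1], u continuous) satisfying the constraint and boundary conditions. -/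
/-!
Through the Beta integral, the Caputo derivative of a power is again a power:
`D^α t^β = Γ(β+1)/Γ(β+1-α) t^(β-α)`. For `x̄ = 2t^(α+2)/Γ(α+3)` this gives `D^α x̄ = t²`
while `x̄' = ū`, so the dynamics hold. Since `t ū(t) = (α+2) x̄(t)`, the integrand of `J`
vanishes at `(x̄, ū)`, and `J ≥ 0` as the integral of a square.
-/

/-- Left Caputo fractional derivative of order `α ∈ (0,1)` with base point `0`. -/
noncomputable def caputoL0 (α : ℝ) (x : ℝ → ℝ) (t : ℝ) : ℝ :=
  (1 / Real.Gamma (1 - α)) * ∫ τ in (0 : ℝ)..t, (t - τ) ^ (-α) * deriv x τ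

/-- The cost functional `J(x,u) = ∫_0^1 (t u(t) − (α+2) x(t))² dt`. -/
noncomputable def Jex (α : ℝ) (x u : ℝ → ℝ) : ℝ :=
  ∫ t in (0 : ℝ)..1, (t * u t - (α + 2) * x t) ^ 2

open Real

theorem integral_rpow_mul_sub_rpow {a b t : ℝ} (ha : 0 < a) (hb : 0 < b) (ht : 0 < t) :
    ∫ τ in (0 : ℝ)..t, τ ^ (a - 1) * (t - τ) ^ (b - 1) =
      Gamma a * Gamma b / Gamma (a + b) * t ^ (a + b - 1) := by
  apply Complex.ofReal_injective
  have hcpow : ∀ τ ∈ Set.uIcc 0 t, ((τ ^ (a - 1) * (t - τ) ^ (b - 1) : ℝ) : ℂ) =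
      (τ : ℂ) ^ ((a : ℂ) - 1) * ((t : ℂ) - τ) ^ ((b : ℂ) - 1) := by
    intro τ hτ
    rw [Set.uIcc_of_le ht.le] at hτ
    push_cast [Complex.ofReal_cpow hτ.1, Complex.ofReal_cpow (sub_nonneg.2 hτ.2)]
    rfl
  rw [← intervalIntegral.integral_ofReal, intervalIntegral.integral_congr hcpow,
    Complex.betaIntegral_scaled _ _ ht,
    Complex.betaIntegral_eq_Gamma_mul_div _ _ (by simpa using ha) (by simpa using hb),
    ← Complex.ofReal_add, Complex.Gamma_ofReal, Complex.Gamma_ofReal, Complex.Gamma_ofReal]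
  push_cast [Complex.ofReal_cpow ht.le]
  ring

theorem caputoL0_const_mul (α c : ℝ) (x : ℝ → ℝ) (t : ℝ) :
    caputoL0 α (fun s => c * x s) t = c * caputoL0 α x t := by
  simp only [caputoL0, deriv_const_mul_field', mul_left_comm _ c,
    intervalIntegral.integral_const_mul]

theorem caputoL0_rpow {α β t : ℝ} (hα : α < 1) (hβ : 0 < β) (hαβ : α < β) (ht : 0 ≤ t) :
    caputoL0 α (fun s => s ^ β) t = Gamma (β + 1) / Gamma (β + 1 - α) * t ^ (β - α) := by
  rcases ht.eq_or_lt with rfl | ht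
  · simp [caputoL0, zero_rpow (sub_pos.2 hαβ).ne']
  have hkernel : ∫ τ in (0 : ℝ)..t, (t - τ) ^ (-α) * deriv (fun s => s ^ β) τ =
      β * ∫ τ in (0 : ℝ)..t, τ ^ (β - 1) * (t - τ) ^ (1 - α - 1) := by
    rw [← intervalIntegral.integral_const_mul]
    congr with τ
    rw [Real.deriv_rpow_const, sub_sub_cancel_left]
    ring
  have hΓ : Gamma (1 - α) ≠ 0 := (Gamma_pos_of_pos (sub_pos.2 hα)).ne'
  rw [caputoL0, hkernel, integral_rpow_mul_sub_rpow hβ (sub_pos.2 hα) ht, Gamma_add_one hβ.ne',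
    add_sub_assoc', add_sub_right_comm, add_sub_cancel_right]
  field_simp

theorem Jex_nonneg (α : ℝ) (x u : ℝ → ℝ) : 0 ≤ Jex α x u := by
  rw [Jex]
  exact intervalIntegral.integral_nonneg zero_le_one fun _ _ => sq_nonneg _

theorem Jex_eq_zero_of_mul_eq {α : ℝ} {x u : ℝ → ℝ}
    (h : ∀ t ∈ Set.Icc (0 : ℝ) 1, t * u t = (α + 2) * x t) : Jex α x u = 0 := by
  rw [Jex, intervalIntegral.integral_congr (g := fun _ => (0 : ℝ)), intervalIntegral.integral_zero]
  intro t ht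
  rw [Set.uIcc_of_le zero_le_one] at ht
  simp [h t ht]

/-- The pair `x̄(t) = 2t^{α+2}/Γ(α+3)`, `ū(t) = 2t^{α+1}/Γ(α+2)` is an optimal
solution of the fractional optimal control problem
`min ∫_0^1 (tu − (α+2)x)² dt` subject to `x' + ^C_0D^α x = u + t²`,
`x(0) = 0`, `x(1) = 2/Γ(3+α)`. -/
theorem example_optimal_solution (α : ℝ) (hα : α ∈ Set.Ioo (0 : ℝ) 1) :
    (∀ t ∈ Set.Icc (0 : ℝ) 1,
        deriv (fun s : ℝ => 2 * s ^ (α + 2) / Real.Gamma (α + 3)) t +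
          caputoL0 α (fun s : ℝ => 2 * s ^ (α + 2) / Real.Gamma (α + 3)) t =
        2 * t ^ (α + 1) / Real.Gamma (α + 2) + t ^ (2 : ℕ)) ∧
    ((fun s : ℝ => 2 * s ^ (α + 2) / Real.Gamma (α + 3)) 0 = 0 ∧
      (fun s : ℝ => 2 * s ^ (α + 2) / Real.Gamma (α + 3)) 1 = 2 / Real.Gamma (3 + α)) ∧
    (Jex α (fun s : ℝ => 2 * s ^ (α + 2) / Real.Gamma (α + 3))
        (fun s : ℝ => 2 * s ^ (α + 1) / Real.Gamma (α + 2)) = 0) ∧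
    (∀ x u : ℝ → ℝ, ContDiff ℝ 1 x → Continuous u →
      (∀ t ∈ Set.Icc (0 : ℝ) 1,
        deriv x t + caputoL0 α x t = u t + t ^ (2 : ℕ)) →
      x 0 = 0 → x 1 = 2 / Real.Gamma (3 + α) →
      Jex α (fun s : ℝ => 2 * s ^ (α + 2) / Real.Gamma (α + 3))
          (fun s : ℝ => 2 * s ^ (α + 1) / Real.Gamma (α + 2)) ≤ Jex α x u) := by
  obtain ⟨hα0, hα1⟩ := hα
  have hΓ : Gamma (α + 3) = (α + 2) * Gamma (α + 2) := by
    rw [show α + 3 = α + 2 + 1 by ring, Gamma_add_one (by positivity)]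
  have hΓ₃ : Gamma (α + 2 + 1 - α) = 2 := by
    rw [show α + 2 + 1 - α = 2 + 1 by ring, Gamma_add_one two_ne_zero, Gamma_two]
    norm_num
  have hxbar : (fun s : ℝ => 2 * s ^ (α + 2) / Gamma (α + 3)) =
      fun s => 2 / Gamma (α + 3) * s ^ (α + 2) := by
    funext s
    ring
  have hJ : Jex α (fun s : ℝ => 2 * s ^ (α + 2) / Gamma (α + 3))
      (fun s : ℝ => 2 * s ^ (α + 1) / Gamma (α + 2)) = 0 := by
    refine Jex_eq_zero_of_mul_eq fun t ht => ?_
    have hpow : t ^ (α + 2) = t * t ^ (α + 1) := by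
      rw [← rpow_one_add' ht.1 (by positivity)]
      ring_nf
    rw [hpow, hΓ]
    field_simp
  refine ⟨fun t ht => ?_, ⟨?_, ?_⟩, hJ, fun x u _ _ _ _ _ => hJ ▸ Jex_nonneg α x u⟩
  · rw [hxbar, caputoL0_const_mul, caputoL0_rpow hα1 (by positivity) (by linarith) ht.1, hΓ₃,
      deriv_const_mul_field, Real.deriv_rpow_const, show α + 2 + 1 = α + 3 by ring, hΓ,
      show α + 2 - 1 = α + 1 by ring, add_sub_cancel_left, rpow_two]
    field_simp
  · simp [zero_rpow (by positivity : α + 2 ≠ 0)]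
  · simp [add_comm α 3]
end
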